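/- Let d ≥ 1, n = (n₁,…,n_d) with each n_j ≥ 1, and let A ∈ ℂ^{n×n} be a density tensor. Then ‖A‖_{1,ℂ} ≥ 1, and equality ‖A‖_{1,ℂ} = 1 holds if and only if A is separable. -/

import Mathlib

open scoped ComplexOrder

noncomputable section


/-- The Euclidean norm of a vector in `ℂ^k`. -/
def vnorm {k : ℕ} (x : Fin k → ℂ) : ℝ :=
  Real.sqrt (∑ i, ‖x i‖ ^ 2)

/-- Multi-indices for `ℂ^{n₁ × ⋯ × n_d}`. -/
abbrev MIdx (d : ℕ) (n : Fin d → ℕ) := ∀ j, Fin (n j)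

/-- The trace of a `2d`-mode tensor `A ∈ ℂ^{n×n}`, viewed as a matrix. -/
def traceT {d : ℕ} {n : Fin d → ℕ} (A : MIdx d n → MIdx d n → ℂ) : ℂ :=
  ∑ p, A p p

/-- The nuclear norm of a `2d`-mode tensor `A ∈ ℂ^{n×n}`:
the minimum of `∑ᵢ (∏ⱼ ‖x_{j,i}‖)·(∏ⱼ ‖y_{j,i}‖)` over decompositions
`A = ∑ᵢ x_{1,i}⊗⋯⊗x_{d,i}⊗y_{1,i}⊗⋯⊗y_{d,i}`. -/
def nucNorm2 {d : ℕ} {n : Fin d → ℕ} (A : MIdx d n → MIdx d n → ℂ) : ℝ :=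
  sInf {r : ℝ | ∃ (m : ℕ) (x y : Fin m → ∀ j, Fin (n j) → ℂ),
    A = (fun p q => ∑ i, (∏ j, x i j (p j)) * (∏ j, y i j (q j))) ∧
    r = ∑ i, (∏ j, vnorm (x i j)) * (∏ j, vnorm (y i j))}

/-- A density tensor: hermitian positive semidefinite with trace one. -/
def IsDensity {d : ℕ} {n : Fin d → ℕ} (A : MIdx d n → MIdx d n → ℂ) : Prop :=
  (Matrix.of A).PosSemidef ∧ traceT A = 1

/-- A separable (density) tensor:
`A = ∑ᵢ pᵢ (x_{1,i}⊗⋯⊗x_{d,i}) ⊗ (conj x_{1,i}⊗⋯⊗conj x_{d,i})` with unit vectors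
`x_{j,i}`, `pᵢ ≥ 0`, `∑ pᵢ = 1`. -/
def Separable {d : ℕ} {n : Fin d → ℕ} (A : MIdx d n → MIdx d n → ℂ) : Prop :=
  ∃ (r : ℕ) (p : Fin r → ℝ) (x : Fin r → ∀ j, Fin (n j) → ℂ),
    (∀ i j, vnorm (x i j) = 1) ∧ (∀ i, 0 ≤ p i) ∧ (∑ i, p i) = 1 ∧
    A = fun a b => ∑ i, (p i : ℂ) *
      ((∏ j, x i j (a j)) * ∏ j, (starRingEnd ℂ) (x i j (b j)))

/-! For a rank-one term the trace factors as `∏ⱼ ∑ₐ xⱼ(a) yⱼ(a)`, so by Cauchy–Schwarz its modulus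
is at most the cost `∏ⱼ ‖xⱼ‖ ‖yⱼ‖`; summing over a decomposition, `tr A = 1` gives `‖A‖₁ ≥ 1`,
and a separable decomposition has cost `∑ pᵢ = 1`.

Conversely, the unit ball of the nuclear norm is the convex hull of the rank-one tensors with
factors in the unit balls. That hull is compact (Carathéodory), so `‖A‖₁ = 1` is attained by a
decomposition of cost at most `1`. Then every inequality in the first chain is an equality: each
term has trace equal to its cost, a nonnegative real, and equality in Cauchy–Schwarz makes every
`yⱼ` a multiple of `conj xⱼ`, which is a separable decomposition of `A`. -/

open Finset

theorem Convex.sum_smul_mem_of_sum_le_one {𝕜 E : Type*} [Field 𝕜] [LinearOrder 𝕜]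
    [IsStrictOrderedRing 𝕜] [AddCommGroup E] [Module 𝕜 E] {s : Set E} (hs : Convex 𝕜 s)
    (h₀ : (0 : E) ∈ s) {ι : Type*} [Fintype ι] {w : ι → 𝕜} {z : ι → E}
    (hw₀ : ∀ i, 0 ≤ w i) (hw₁ : ∑ i, w i ≤ 1) (hz : ∀ i, z i ∈ s) : ∑ i, w i • z i ∈ s := by
  have := hs.sum_mem (t := univ) (w := fun o : Option ι => o.elim (1 - ∑ i, w i) w)
    (z := fun o => o.elim 0 z) ?_ ?_ ?_
  · simpa [Fintype.sum_option] using this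
  · rintro (_ | i) _ <;> simp [hw₀, hw₁]
  · simp [Fintype.sum_option]
  · rintro (_ | i) _ <;> simp [h₀, hz]

theorem IsCompact.isCompact_convexHull {E : Type*} [NormedAddCommGroup E] [NormedSpace ℝ E]
    [FiniteDimensional ℝ E] {s : Set E} (hs : IsCompact s) : IsCompact (convexHull ℝ s) := by
  -- Carathéodory: the hull consists of convex combinations of at most `finrank ℝ E + 1` points.
  suffices h : convexHull ℝ s = ⋃ k : Fin (Module.finrank ℝ E + 2),
      (fun wz : (Fin k → ℝ) × (Fin k → E) => ∑ i, wz.1 i • wz.2 i) ''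
        (stdSimplex ℝ (Fin k) ×ˢ Set.univ.pi fun _ => s) by
    rw [h]
    exact isCompact_iUnion fun k =>
      ((isCompact_stdSimplex _ _).prod (isCompact_univ_pi fun _ => hs)).image (by fun_prop)
  refine Set.Subset.antisymm (fun x hx => ?_) ?_
  · obtain ⟨ι, _, z, w, hzs, hind, hw₀, hw₁, rfl⟩ :=
      eq_pos_convex_span_of_mem_convexHull hx
    have hcard : Fintype.card ι < Module.finrank ℝ E + 2 := Nat.lt_succ_of_le <|
      hind.card_le_finrank_succ.trans (Nat.succ_le_succ (Submodule.finrank_le _))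
    let e := Fintype.equivFin ι
    refine Set.mem_iUnion.2 ⟨⟨_, hcard⟩, (w ∘ e.symm, z ∘ e.symm),
      ⟨⟨fun i => (hw₀ _).le, ?_⟩, fun i _ => hzs (Set.mem_range_self _)⟩, ?_⟩
    · simpa [Function.comp_def, e.symm.sum_comp w] using hw₁
    · exact e.symm.sum_comp fun i => w i • z i
  · refine Set.iUnion_subset fun k => ?_
    rintro _ ⟨⟨w, z⟩, ⟨⟨hw₀, hw₁⟩, hz⟩, rfl⟩
    exact (convex_convexHull ℝ s).sum_mem (fun i _ => hw₀ i) hw₁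
      fun i _ => subset_convexHull ℝ s (hz i (Set.mem_univ i))

section Vnorm
variable {k : ℕ}

lemma vnorm_eq_norm_toLp (x : Fin k → ℂ) : vnorm x = ‖WithLp.toLp 2 x‖ := by
  rw [EuclideanSpace.norm_eq]; rfl

lemma vnorm_nonneg (x : Fin k → ℂ) : 0 ≤ vnorm x := Real.sqrt_nonneg _

@[simp]
lemma vnorm_eq_zero {x : Fin k → ℂ} : vnorm x = 0 ↔ x = 0 := by
  rw [vnorm_eq_norm_toLp, norm_eq_zero, WithLp.toLp_eq_zero]

@[simp]
lemma vnorm_zero : vnorm (0 : Fin k → ℂ) = 0 := vnorm_eq_zero.2 rfl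

@[simp]
lemma vnorm_smul (c : ℂ) (x : Fin k → ℂ) : vnorm (c • x) = ‖c‖ * vnorm x := by
  rw [vnorm_eq_norm_toLp, WithLp.toLp_smul, norm_smul, vnorm_eq_norm_toLp]

@[simp]
lemma vnorm_star (x : Fin k → ℂ) : vnorm (star x) = vnorm x := by
  simp [vnorm]

@[simp]
lemma vnorm_single (a : Fin k) : vnorm (Pi.single a 1) = 1 := by
  simp [vnorm, Pi.single_apply, apply_ite]

lemma sum_mul_eq_inner (x y : Fin k → ℂ) :
    ∑ a, x a * y a =
      inner ℂ (WithLp.toLp 2 (star x) : EuclideanSpace ℂ (Fin k)) (WithLp.toLp 2 y) := by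
  simp [PiLp.inner_apply, mul_comm]

lemma norm_sum_mul_le (x y : Fin k → ℂ) : ‖∑ a, x a * y a‖ ≤ vnorm x * vnorm y := by
  rw [sum_mul_eq_inner, ← vnorm_star x, vnorm_eq_norm_toLp, vnorm_eq_norm_toLp]
  exact norm_inner_le_norm _ _

lemma exists_eq_smul_star_of_norm_sum_mul_eq {x y : Fin k → ℂ} (hx : x ≠ 0) (hy : y ≠ 0)
    (h : ‖∑ a, x a * y a‖ = vnorm x * vnorm y) : ∃ c : ℂ, y = c • star x := by
  rw [sum_mul_eq_inner, ← vnorm_star x, vnorm_eq_norm_toLp, vnorm_eq_norm_toLp,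
    norm_inner_eq_norm_iff (by simpa using hx) (by simpa using hy)] at h
  obtain ⟨c, -, hc⟩ := h
  exact ⟨c, by simpa using congrArg WithLp.ofLp hc⟩

lemma sum_mul_conj_self (x : Fin k → ℂ) :
    ∑ a, x a * starRingEnd ℂ (x a) = (vnorm x : ℂ) ^ 2 := by
  rw [← Complex.ofReal_pow, vnorm, Real.sq_sqrt (by positivity)]
  simp [Complex.mul_conj']

lemma isCompact_setOf_vnorm_le_one (k : ℕ) : IsCompact {x : Fin k → ℂ | vnorm x ≤ 1} := by
  convert (isCompact_closedBall (0 : EuclideanSpace ℂ (Fin k)) 1).image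
    (PiLp.continuous_ofLp 2 _)
  ext x
  refine ⟨fun hx => ⟨_, by simpa [vnorm_eq_norm_toLp] using hx, rfl⟩, ?_⟩
  rintro ⟨y, hy, rfl⟩
  simpa [vnorm_eq_norm_toLp] using hy

def vnormalize (x : Fin k → ℂ) : Fin k → ℂ := ((vnorm x : ℂ))⁻¹ • x

lemma vnorm_smul_vnormalize (x : Fin k → ℂ) : (vnorm x : ℂ) • vnormalize x = x := by
  rcases eq_or_ne x 0 with rfl | hx
  · simp [vnormalize]
  · rw [vnormalize, smul_inv_smul₀ (by simpa using hx)]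

lemma vnorm_vnormalize {x : Fin k → ℂ} (hx : x ≠ 0) : vnorm (vnormalize x) = 1 := by
  have : vnorm x ≠ 0 := by simpa using hx
  simp [vnormalize, abs_of_nonneg (vnorm_nonneg x), this]

lemma vnorm_vnormalize_le_one (x : Fin k → ℂ) : vnorm (vnormalize x) ≤ 1 := by
  rcases eq_or_ne x 0 with rfl | hx
  · simp [vnormalize]
  · exact (vnorm_vnormalize hx).le

end Vnorm

lemma Finset.eq_of_le_of_prod_eq_prod {ι : Type*} {s : Finset ι} {f g : ι → ℝ}
    (hf : ∀ i ∈ s, 0 ≤ f i) (hfg : ∀ i ∈ s, f i ≤ g i) (hg : ∀ i ∈ s, 0 < g i)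
    (h : ∏ i ∈ s, f i = ∏ i ∈ s, g i) : ∀ i ∈ s, f i = g i := by
  by_contra! ⟨i, hi, hne⟩
  have hpos : ∀ j ∈ s, 0 < f j := fun j hj => (hf j hj).lt_of_ne fun h0 =>
    (prod_pos hg).ne' (h ▸ prod_eq_zero hj h0.symm)
  exact (prod_lt_prod hpos hfg ⟨i, hi, (hfg i hi).lt_of_ne hne⟩).ne h

lemma Complex.eq_ofReal_of_sum_eq_one {ι : Type*} {s : Finset ι} {t : ι → ℂ} {c : ι → ℝ}
    (ht : ∑ i ∈ s, t i = 1) (htc : ∀ i ∈ s, ‖t i‖ ≤ c i) (hc : ∑ i ∈ s, c i ≤ 1) :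
    ∀ i ∈ s, t i = c i := by
  have hre : ∀ i ∈ s, (t i).re ≤ c i := fun i hi => (re_le_norm _).trans (htc i hi)
  have hsum : ∑ i ∈ s, (t i).re = ∑ i ∈ s, c i :=
    le_antisymm (sum_le_sum hre) (by rw [← re_sum, ht, one_re]; exact hc)
  intro i hi
  have hci := (sum_eq_sum_iff_of_le hre).1 hsum i hi
  have : 0 ≤ t i := re_eq_norm.1 (le_antisymm (re_le_norm _) (hci ▸ htc i hi))
  rw [eq_re_of_ofReal_le this, hci]

section Tensor
variable {d : ℕ} {n : Fin d → ℕ}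

def rankOne (x y : ∀ j, Fin (n j) → ℂ) : MIdx d n → MIdx d n → ℂ :=
  fun p q => (∏ j, x j (p j)) * ∏ j, y j (q j)

def rankOneCost (x y : ∀ j, Fin (n j) → ℂ) : ℝ :=
  (∏ j, vnorm (x j)) * ∏ j, vnorm (y j)

def decompositionCosts (A : MIdx d n → MIdx d n → ℂ) : Set ℝ :=
  {r | ∃ (m : ℕ) (x y : Fin m → ∀ j, Fin (n j) → ℂ),
    A = ∑ i, rankOne (x i) (y i) ∧ r = ∑ i, rankOneCost (x i) (y i)}

lemma nucNorm2_eq_sInf (A : MIdx d n → MIdx d n → ℂ) :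
    nucNorm2 A = sInf (decompositionCosts A) := by
  simp only [nucNorm2, decompositionCosts, rankOne, rankOneCost, Finset.sum_fn]

lemma rankOneCost_nonneg (x y : ∀ j, Fin (n j) → ℂ) : 0 ≤ rankOneCost x y :=
  mul_nonneg (prod_nonneg fun _ _ => vnorm_nonneg _) (prod_nonneg fun _ _ => vnorm_nonneg _)

lemma rankOneCost_le_one {x y : ∀ j, Fin (n j) → ℂ} (hx : ∀ j, vnorm (x j) ≤ 1)
    (hy : ∀ j, vnorm (y j) ≤ 1) : rankOneCost x y ≤ 1 :=
  mul_le_one₀ (prod_le_one (fun _ _ => vnorm_nonneg _) fun j _ => hx j)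
    (prod_nonneg fun _ _ => vnorm_nonneg _)
    (prod_le_one (fun _ _ => vnorm_nonneg _) fun j _ => hy j)

lemma rankOne_smul_left (a : Fin d → ℂ) (x y : ∀ j, Fin (n j) → ℂ) :
    rankOne (fun j => a j • x j) y = (∏ j, a j) • rankOne x y := by
  ext p q
  simp [rankOne, prod_mul_distrib, mul_assoc]

lemma rankOne_smul_right (b : Fin d → ℂ) (x y : ∀ j, Fin (n j) → ℂ) :
    rankOne x (fun j => b j • y j) = (∏ j, b j) • rankOne x y := by
  ext p q
  simp [rankOne, prod_mul_distrib]
  ring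

lemma rankOneCost_smul_left (a : Fin d → ℂ) (x y : ∀ j, Fin (n j) → ℂ) :
    rankOneCost (fun j => a j • x j) y = ‖∏ j, a j‖ * rankOneCost x y := by
  simp [rankOneCost, prod_mul_distrib, norm_prod, mul_assoc]

lemma rankOne_eq_rankOneCost_smul (x y : ∀ j, Fin (n j) → ℂ) :
    rankOne x y = (rankOneCost x y : ℂ) •
      rankOne (fun j => vnormalize (x j)) (fun j => vnormalize (y j)) := by
  conv_lhs => rw [← funext fun j => vnorm_smul_vnormalize (x j),
    ← funext fun j => vnorm_smul_vnormalize (y j)]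
  rw [rankOne_smul_left, rankOne_smul_right, smul_smul, rankOneCost]
  push_cast
  ring_nf

lemma traceT_sum {ι : Type*} (s : Finset ι) (A : ι → MIdx d n → MIdx d n → ℂ) :
    traceT (∑ i ∈ s, A i) = ∑ i ∈ s, traceT (A i) := by
  simp only [traceT, Finset.sum_apply]
  exact sum_comm

lemma traceT_rankOne (x y : ∀ j, Fin (n j) → ℂ) :
    traceT (rankOne x y) = ∏ j, ∑ a, x j a * y j a := by
  simp only [traceT, rankOne, prod_univ_sum, Fintype.piFinset_univ, prod_mul_distrib]

lemma norm_traceT_rankOne_le (x y : ∀ j, Fin (n j) → ℂ) :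
    ‖traceT (rankOne x y)‖ ≤ rankOneCost x y := by
  rw [traceT_rankOne, norm_prod, rankOneCost, ← prod_mul_distrib]
  exact prod_le_prod (fun j _ => norm_nonneg _) fun j _ => norm_sum_mul_le _ _

lemma sum_mem_decompositionCosts {ι : Type*} [Fintype ι] (x y : ι → ∀ j, Fin (n j) → ℂ) :
    ∑ i, rankOneCost (x i) (y i) ∈ decompositionCosts (∑ i, rankOne (x i) (y i)) := by
  let e := (Fintype.equivFin ι).symm
  exact ⟨_, x ∘ e, y ∘ e, (e.sum_comp fun i => rankOne (x i) (y i)).symm,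
    (e.sum_comp fun i => rankOneCost (x i) (y i)).symm⟩

-- A scalar is absorbed into the first factor of the first mode.
lemma sum_smul_mem_decompositionCosts [NeZero d] {ι : Type*} [Fintype ι] (c : ι → ℂ)
    (x y : ι → ∀ j, Fin (n j) → ℂ) :
    ∑ i, ‖c i‖ * rankOneCost (x i) (y i) ∈
      decompositionCosts (∑ i, c i • rankOne (x i) (y i)) := by
  simpa [rankOne_smul_left, rankOneCost_smul_left, Fintype.prod_pi_mulSingle'] using
    sum_mem_decompositionCosts (fun i j => (Pi.mulSingle 0 (c i) : Fin d → ℂ) j • x i j) y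

lemma eq_sum_smul_rankOne_single (A : MIdx d n → MIdx d n → ℂ) :
    A = ∑ pq : MIdx d n × MIdx d n, A pq.1 pq.2 •
      rankOne (fun j => Pi.single (pq.1 j) 1) (fun j => Pi.single (pq.2 j) 1) := by
  ext p q
  simp [rankOne, Finset.sum_apply, Pi.single_apply, prod_boole, Fintype.sum_prod_type,
    ← funext_iff]

lemma decompositionCosts_nonempty [NeZero d] (A : MIdx d n → MIdx d n → ℂ) :
    (decompositionCosts A).Nonempty := by
  rw [eq_sum_smul_rankOne_single A]
  exact ⟨_, sum_smul_mem_decompositionCosts _ _ _⟩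

lemma bddBelow_decompositionCosts (A : MIdx d n → MIdx d n → ℂ) :
    BddBelow (decompositionCosts A) := by
  refine ⟨0, ?_⟩
  rintro _ ⟨m, x, y, -, rfl⟩
  exact sum_nonneg fun i _ => rankOneCost_nonneg _ _

lemma one_le_of_mem_decompositionCosts {A : MIdx d n → MIdx d n → ℂ} (htr : traceT A = 1)
    {r : ℝ} (hr : r ∈ decompositionCosts A) : 1 ≤ r := by
  obtain ⟨m, x, y, rfl, rfl⟩ := hr
  calc (1 : ℝ) = ‖traceT (∑ i, rankOne (x i) (y i))‖ := by rw [htr, norm_one]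
    _ ≤ ∑ i, ‖traceT (rankOne (x i) (y i))‖ := by rw [traceT_sum]; exact norm_sum_le _ _
    _ ≤ ∑ i, rankOneCost (x i) (y i) := sum_le_sum fun i _ => norm_traceT_rankOne_le _ _

lemma one_le_nucNorm2 [NeZero d] {A : MIdx d n → MIdx d n → ℂ} (htr : traceT A = 1) :
    1 ≤ nucNorm2 A := by
  rw [nucNorm2_eq_sInf]
  exact le_csInf (decompositionCosts_nonempty A) fun _ => one_le_of_mem_decompositionCosts htr

lemma separable_iff_exists_sum_smul_rankOne {A : MIdx d n → MIdx d n → ℂ} :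
    Separable A ↔ ∃ (r : ℕ) (p : Fin r → ℝ) (x : Fin r → ∀ j, Fin (n j) → ℂ),
      (∀ i j, vnorm (x i j) = 1) ∧ (∀ i, 0 ≤ p i) ∧ ∑ i, p i = 1 ∧
      A = ∑ i, (p i : ℂ) • rankOne (x i) (fun j => star (x i j)) := by
  have h (r : ℕ) (p : Fin r → ℝ) (x : Fin r → ∀ j, Fin (n j) → ℂ) :
      (fun a b => ∑ i, (p i : ℂ) *
        ((∏ j, x i j (a j)) * ∏ j, (starRingEnd ℂ) (x i j (b j)))) =
        ∑ i, (p i : ℂ) • rankOne (x i) (fun j => star (x i j)) := by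
    ext a b
    simp [rankOne, Finset.sum_apply]
  simp only [Separable, h]

lemma nucNorm2_le_one_of_separable [NeZero d] {A : MIdx d n → MIdx d n → ℂ}
    (hA : Separable A) : nucNorm2 A ≤ 1 := by
  obtain ⟨r, p, x, hx, hp₀, hp₁, rfl⟩ := separable_iff_exists_sum_smul_rankOne.1 hA
  rw [nucNorm2_eq_sInf]
  refine (csInf_le (bddBelow_decompositionCosts _)
    (sum_smul_mem_decompositionCosts (fun i => (p i : ℂ)) x fun i j => star (x i j))).trans_eq ?_
  simp [rankOneCost, hx, abs_of_nonneg (hp₀ _), hp₁]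

end Tensor

section UnitBall
variable {d : ℕ} {n : Fin d → ℕ}

-- Its convex hull is the unit ball of the nuclear norm.
def unitRankOnes : Set (MIdx d n → MIdx d n → ℂ) :=
  (fun xy : (∀ j, Fin (n j) → ℂ) × (∀ j, Fin (n j) → ℂ) => rankOne xy.1 xy.2) ''
    (Set.univ.pi (fun _ => {v | vnorm v ≤ 1}) ×ˢ Set.univ.pi (fun _ => {v | vnorm v ≤ 1}))

lemma isCompact_unitRankOnes : IsCompact (unitRankOnes (n := n)) :=
  ((isCompact_univ_pi fun _ => isCompact_setOf_vnorm_le_one _).prod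
    (isCompact_univ_pi fun _ => isCompact_setOf_vnorm_le_one _)).image
    (by unfold rankOne; fun_prop)

lemma rankOne_mem_unitRankOnes {x y : ∀ j, Fin (n j) → ℂ} (hx : ∀ j, vnorm (x j) ≤ 1)
    (hy : ∀ j, vnorm (y j) ≤ 1) : rankOne x y ∈ unitRankOnes :=
  ⟨(x, y), ⟨fun j _ => hx j, fun j _ => hy j⟩, rfl⟩

lemma zero_mem_unitRankOnes [NeZero d] : (0 : MIdx d n → MIdx d n → ℂ) ∈ unitRankOnes := by
  convert rankOne_mem_unitRankOnes (x := 0) (y := 0) (by simp) (by simp)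
  ext p q
  simp [rankOne, NeZero.ne d]

lemma mem_convexHull_of_mem_decompositionCosts [NeZero d] {A : MIdx d n → MIdx d n → ℂ}
    {r : ℝ} (hr : r ∈ decompositionCosts A) (h1 : r ≤ 1) : A ∈ convexHull ℝ unitRankOnes := by
  obtain ⟨m, x, y, rfl, rfl⟩ := hr
  simp_rw [rankOne_eq_rankOneCost_smul (x _), Complex.coe_smul]
  exact (convex_convexHull ℝ _).sum_smul_mem_of_sum_le_one
    (subset_convexHull ℝ _ zero_mem_unitRankOnes) (fun i => rankOneCost_nonneg _ _) h1
    fun i => subset_convexHull ℝ _ <| rankOne_mem_unitRankOnes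
      (fun _ => vnorm_vnormalize_le_one _) (fun _ => vnorm_vnormalize_le_one _)

lemma exists_mem_decompositionCosts_le_one [NeZero d] {A : MIdx d n → MIdx d n → ℂ}
    (hA : A ∈ convexHull ℝ unitRankOnes) : ∃ r ∈ decompositionCosts A, r ≤ 1 := by
  obtain ⟨ι, _, T, w, hT, -, hw₀, hw₁, rfl⟩ := eq_pos_convex_span_of_mem_convexHull hA
  choose xy hxy hxyT using fun i => hT (Set.mem_range_self i)
  have hmem := sum_smul_mem_decompositionCosts (fun i => (w i : ℂ)) (fun i => (xy i).1)
    (fun i => (xy i).2)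
  simp only [hxyT, Complex.coe_smul] at hmem
  refine ⟨_, hmem, ?_⟩
  refine (sum_le_sum fun i _ => ?_).trans_eq hw₁
  rw [Complex.norm_real, Real.norm_of_nonneg (hw₀ i).le]
  exact mul_le_of_le_one_right (hw₀ i).le <|
    rankOneCost_le_one (fun j => (hxy i).1 j trivial) (fun j => (hxy i).2 j trivial)

lemma mem_convexHull_of_nucNorm2_le_one [NeZero d] {A : MIdx d n → MIdx d n → ℂ}
    (h : nucNorm2 A ≤ 1) : A ∈ convexHull ℝ unitRankOnes := by
  have hs : ∀ s ∈ Set.Ioo (0 : ℝ) 1, s • A ∈ convexHull ℝ unitRankOnes := by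
    rintro s ⟨hs₀, hs₁⟩
    have hlt : sInf (decompositionCosts A) < s⁻¹ :=
      (nucNorm2_eq_sInf A ▸ h).trans_lt ((one_lt_inv₀ hs₀).2 hs₁)
    obtain ⟨r, hr, hrs⟩ :=
      (csInf_lt_iff (bddBelow_decompositionCosts A) (decompositionCosts_nonempty A)).1 hlt
    obtain ⟨m, x, y, rfl, rfl⟩ := hr
    refine mem_convexHull_of_mem_decompositionCosts
      (by simpa [smul_sum, Complex.coe_smul] using
        sum_smul_mem_decompositionCosts (fun _ => (s : ℂ)) x y) ?_
    calc ∑ i, |s| * rankOneCost (x i) (y i) = s * ∑ i, rankOneCost (x i) (y i) := by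
          rw [← mul_sum, abs_of_pos hs₀]
      _ ≤ s * s⁻¹ := by gcongr
      _ = 1 := mul_inv_cancel₀ hs₀.ne'
  refine isCompact_unitRankOnes.isCompact_convexHull.isClosed.mem_of_tendsto ?_
    (Filter.mem_of_superset (Ioo_mem_nhdsLT zero_lt_one) hs)
  simpa using ((continuous_id.smul continuous_const).tendsto (1 : ℝ)).mono_left
    (nhdsWithin_le_nhds (s := Set.Iio 1)) (f := fun s : ℝ => s • A)

end UnitBall

section Separable
variable {d : ℕ} {n : Fin d → ℕ}

lemma rankOne_smul_star_eq_traceT_smul (x : ∀ j, Fin (n j) → ℂ) (c : Fin d → ℂ) :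
    rankOne x (fun j => c j • star (x j)) =
      traceT (rankOne x fun j => c j • star (x j)) •
        rankOne (fun j => vnormalize (x j)) (fun j => star (vnormalize (x j))) := by
  have hx : x = fun j => (vnorm (x j) : ℂ) • vnormalize (x j) :=
    funext fun j => (vnorm_smul_vnormalize _).symm
  have htr : traceT (rankOne x fun j => c j • star (x j)) =
      ∏ j, c j * (vnorm (x j) : ℂ) ^ 2 := by
    simp [traceT_rankOne, mul_left_comm _ (c _), ← mul_sum, sum_mul_conj_self]
  conv_lhs => rw [hx]
  simp only [star_smul, Complex.star_def, Complex.conj_ofReal, smul_smul]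
  rw [rankOne_smul_right, rankOne_smul_left, smul_smul, htr]
  congr 1
  simp only [prod_mul_distrib, prod_pow]
  ring

lemma forall_ne_zero_of_rankOneCost_ne_zero {x y : ∀ j, Fin (n j) → ℂ}
    (h : rankOneCost x y ≠ 0) : (∀ j, x j ≠ 0) ∧ ∀ j, y j ≠ 0 :=
  ⟨fun j hj => h (mul_eq_zero_of_left (prod_eq_zero (mem_univ j) (by simp [hj])) _),
    fun j hj => h (mul_eq_zero_of_right _ (prod_eq_zero (mem_univ j) (by simp [hj])))⟩

lemma rankOne_eq_traceT_smul_of_norm_traceT_eq {x y : ∀ j, Fin (n j) → ℂ}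
    (h : ‖traceT (rankOne x y)‖ = rankOneCost x y) :
    rankOne x y = traceT (rankOne x y) •
      rankOne (fun j => vnormalize (x j)) (fun j => star (vnormalize (x j))) := by
  rcases eq_or_ne (rankOneCost x y) 0 with h0 | h0
  · have : traceT (rankOne x y) = 0 := by rw [← norm_eq_zero, h, h0]
    rw [this, zero_smul, rankOne_eq_rankOneCost_smul, h0, Complex.ofReal_zero, zero_smul]
  obtain ⟨hx, hy⟩ := forall_ne_zero_of_rankOneCost_ne_zero h0
  have heq := Finset.eq_of_le_of_prod_eq_prod (fun j _ => norm_nonneg _)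
    (fun j _ => norm_sum_mul_le (x j) (y j))
    (fun j _ => mul_pos ((vnorm_nonneg _).lt_of_ne' (by simpa using hx j))
      ((vnorm_nonneg _).lt_of_ne' (by simpa using hy j)))
    (by rw [← norm_prod, ← traceT_rankOne, h, rankOneCost, prod_mul_distrib])
  choose c hc using fun j =>
    exists_eq_smul_star_of_norm_sum_mul_eq (hx j) (hy j) (heq j (mem_univ j))
  obtain rfl : y = fun j => c j • star (x j) := funext hc
  exact rankOne_smul_star_eq_traceT_smul x c

lemma nonempty_midx_of_traceT_eq_one {A : MIdx d n → MIdx d n → ℂ} (htr : traceT A = 1) :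
    Nonempty (MIdx d n) := by
  by_contra h
  simp [traceT, not_nonempty_iff.1 h] at htr

lemma separable_of_mem_decompositionCosts {A : MIdx d n → MIdx d n → ℂ} (htr : traceT A = 1)
    {r : ℝ} (hr : r ∈ decompositionCosts A) (h1 : r ≤ 1) : Separable A := by
  obtain ⟨m, x, y, rfl, rfl⟩ := hr
  obtain ⟨p₀⟩ := nonempty_midx_of_traceT_eq_one htr
  rw [traceT_sum] at htr
  have ht := Complex.eq_ofReal_of_sum_eq_one htr (fun i _ => norm_traceT_rankOne_le _ _) h1
  -- Terms of cost zero vanish; they get weight `0` and an arbitrary product of unit vectors.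
  let X (i : Fin m) : ∀ j, Fin (n j) → ℂ :=
    if rankOneCost (x i) (y i) = 0 then fun j => Pi.single (p₀ j) 1
    else fun j => vnormalize (x i j)
  have hterm (i : Fin m) :
      rankOne (x i) (y i) =
        (rankOneCost (x i) (y i) : ℂ) • rankOne (X i) (fun j => star (X i j)) := by
    rw [rankOne_eq_traceT_smul_of_norm_traceT_eq, ht i (mem_univ i)]
    · by_cases h0 : rankOneCost (x i) (y i) = 0 <;> simp [X, h0]
    · rw [ht i (mem_univ i), Complex.norm_real, Real.norm_of_nonneg (rankOneCost_nonneg _ _)]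
  refine separable_iff_exists_sum_smul_rankOne.2
    ⟨m, fun i => rankOneCost (x i) (y i), X, fun i j => ?_, fun i => rankOneCost_nonneg _ _, ?_,
      sum_congr rfl fun i _ => hterm i⟩
  · by_cases h0 : rankOneCost (x i) (y i) = 0
    · simp [X, h0]
    · simpa [X, h0] using vnorm_vnormalize ((forall_ne_zero_of_rankOneCost_ne_zero h0).1 j)
  · exact_mod_cast (sum_congr rfl ht).symm.trans htr

end Separable

theorem stmt8_general (d : ℕ) (hd : 1 ≤ d) (n : Fin d → ℕ)
    (A : MIdx d n → MIdx d n → ℂ) (hA : IsDensity A) :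
    1 ≤ nucNorm2 A ∧ (nucNorm2 A = 1 ↔ Separable A) := by
  have : NeZero d := ⟨by omega⟩
  have htr := hA.2
  refine ⟨one_le_nucNorm2 htr, fun h => ?_,
    fun h => (nucNorm2_le_one_of_separable h).antisymm (one_le_nucNorm2 htr)⟩
  obtain ⟨r, hr, hr1⟩ :=
    exists_mem_decompositionCosts_le_one (mem_convexHull_of_nucNorm2_le_one h.le)
  exact separable_of_mem_decompositionCosts htr hr hr1

/-- A density tensor `A` satisfies `‖A‖₁ ≥ 1`, with equality iff `A` is
separable. -/
theorem stmt8 (d : ℕ) (hd : 1 ≤ d) (n : Fin d → ℕ) (hn : ∀ j, 1 ≤ n j)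
    (A : MIdx d n → MIdx d n → ℂ) (hA : IsDensity A) :
    1 ≤ nucNorm2 A ∧ (nucNorm2 A = 1 ↔ Separable A) :=
  stmt8_general d hd n A hA
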